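/- Let C be a pure normal simplicial complex of dimension d−1, let S be a nonempty set of vertices of C, and let F=(v_1,…,v_d) be an ordered facet of C whose ordering is admissible with respect to S. If either F∩S=∅, or S is a face of C not strictly contained in F, then every entry of the vector of distances from F to S is finite. -/

import Mathlib

/-! Common definitions: pure simplicial complexes (represented by their facet sets),
vertex-distance, links, ordered facets, vectors of distances, admissibility, and
monotone/conservative dual paths, following Adiprasito–Benedetti's combinatorial
segments. -/

open scoped Classical

noncomputable section

namespace MCP

variable {V : Type} [DecidableEq V] [Fintype V]

/-- The vertex set of the complex whose set of facets is `C`. -/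
def verts (C : Finset (Finset V)) : Finset V := C.sup id

/-- `f` is a face of the pure complex with facet set `C`. -/
def IsFace (C : Finset (Finset V)) (f : Finset V) : Prop := ∃ F ∈ C, f ⊆ F

/-- `C` is pure of dimension `d - 1`: every facet has `d` vertices. -/
def Pure (C : Finset (Finset V)) (d : ℕ) : Prop := ∀ F ∈ C, F.card = d

/-- The 1-skeleton of the complex: two vertices are joined iff they lie in a common facet. -/
def skeleton (C : Finset (Finset V)) : SimpleGraph V where
  Adj u v := u ≠ v ∧ ∃ F ∈ C, u ∈ F ∧ v ∈ F
  symm := by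
    constructor
    rintro u v ⟨h, F, hF, hu, hv⟩
    exact ⟨h.symm, F, hF, hv, hu⟩
  loopless := by constructor; rintro u ⟨h, -⟩; exact h rfl

/-- Two facets are adjacent in the dual graph iff they differ in a single vertex. -/
def AdjFacets (F G : Finset V) : Prop :=
  F ≠ G ∧ F.card = G.card ∧ (F ∩ G).card + 1 = F.card

/-- A dual path: a list of facets of `C` in which consecutive facets are adjacent. -/
def IsDualPath (C : Finset (Finset V)) (P : List (Finset V)) : Prop :=
  (∀ F ∈ P, F ∈ C) ∧ P.Chain' AdjFacets

/-- `C` is normal: for every face `f`, any two facets containing `f` are joined by a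
dual path all of whose facets contain `f`. -/
def Normal (C : Finset (Finset V)) : Prop :=
  ∀ f : Finset V, ∀ F ∈ C, ∀ G ∈ C, f ⊆ F → f ⊆ G →
    ∃ P : List (Finset V), P.head? = some F ∧ P.getLast? = some G ∧
      (∀ H ∈ P, H ∈ C ∧ f ⊆ H) ∧ P.Chain' AdjFacets

/-- The (facet set of the) link of a vertex `x` in `C`. -/
def link (C : Finset (Finset V)) (x : V) : Finset (Finset V) :=
  (C.filter (fun F => x ∈ F)).image (fun F => F.erase x)

/-- Vertex-distance (in the 1-skeleton) between two sets of vertices, with value `⊤`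
if one of the sets is empty, and with the special `0/1` convention when the complex
is `0`-dimensional. -/
def vdistSets (C : Finset (Finset V)) (S T : Finset V) : ℕ∞ :=
  if C.sup Finset.card ≤ 1 then
    (if S.Nonempty ∧ T.Nonempty then (if (S ∩ T).Nonempty then 0 else 1) else ⊤)
  else ⨅ u ∈ S, ⨅ v ∈ T, (skeleton C).edist u v

/-- The derived target set `S'` in the link of `x`, used in the recursive definitions
of the vector of distances and of admissibility. -/
def targetSet (C : Finset (Finset V)) (x : V) (S : Finset V) : Finset V :=
  if x ∈ S then S ∩ verts (link C x)
  else (verts (link C x)).filter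
    (fun w => vdistSets C {w} S + 1 = vdistSets C {x} S)

/-- The vector of distances from an ordered facet (a list of vertices) to a target set. -/
def distVector : Finset (Finset V) → List V → Finset V → List ℕ∞
  | _, [], _ => []
  | C, x :: rest, S => vdistSets C {x} S :: distVector (link C x) rest (targetSet C x S)

/-- Admissibility of an ordering of a facet with respect to a target set: the first
vertex realizes the vertex-distance from the facet to the target set, and recursively
in the link. -/
def Admissible : Finset (Finset V) → List V → Finset V → Prop
  | _, [], _ => True
  | C, x :: rest, S =>
      vdistSets C {x} S = vdistSets C (x :: rest).toFinset S ∧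
      Admissible (link C x) rest (targetSet C x S)

/-- An ordered facet of `C`: a repetition-free list of vertices forming a facet. -/
def IsOrderedFacet (C : Finset (Finset V)) (L : List V) : Prop :=
  L.Nodup ∧ L.toFinset ∈ C

/-- A dual path of ordered facets. -/
def IsOrderedDualPath (C : Finset (Finset V)) (Γ : List (List V)) : Prop :=
  (∀ L ∈ Γ, IsOrderedFacet C L) ∧
  Γ.Chain' (fun L M => AdjFacets L.toFinset M.toFinset)

/-- A path of ordered facets is monotone towards `S` if its vectors of distances are
strictly lexicographically decreasing. -/
def MonotonePath (C : Finset (Finset V)) (S : Finset V) (Γ : List (List V)) : Prop :=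
  Γ.Chain' (fun L M => List.Lex (· < ·) (distVector C M S) (distVector C L S))

/-- The index of a step: the least position at which the two orderings differ. -/
def stepIndex (L M : List V) : ℕ := sInf {k : ℕ | L[k]? ≠ M[k]?}

/-- The step from `L` to `M` is conservative towards `S`: the removed vertex is the last
vertex of `L`, and `M` is admissibly ordered with maximum index among all admissible
reorderings. -/
def ConservativeStep (C : Finset (Finset V)) (S : Finset V) (L M : List V) : Prop :=
  (∃ x, L.getLast? = some x ∧ L.toFinset \ M.toFinset = {x}) ∧
  Admissible C M S ∧
  ∀ M' : List V, M'.Perm M → Admissible C M' S → stepIndex L M' ≤ stepIndex L M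

/-- A path of ordered facets is conservative towards `S` if its first facet is
admissibly ordered and every step is conservative. -/
def ConservativePath (C : Finset (Finset V)) (S : Finset V) (Γ : List (List V)) : Prop :=
  (∀ L ∈ Γ.head?, Admissible C L S) ∧ Γ.Chain' (ConservativeStep C S)

/-- A monotone conservative dual path of ordered facets towards `S`. -/
def MonoConsPath (C : Finset (Finset V)) (S : Finset V) (Γ : List (List V)) : Prop :=
  IsOrderedDualPath C Γ ∧ MonotonePath C S Γ ∧ ConservativePath C S Γ

/-- The path `Γ` starts at the facet `F`. -/
def StartsAt (Γ : List (List V)) (F : Finset V) : Prop :=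
  ∃ L, Γ.head? = some L ∧ L.toFinset = F

/-- The path `Γ` ends at the facet `F`. -/
def EndsAt (Γ : List (List V)) (F : Finset V) : Prop :=
  ∃ L, Γ.getLast? = some L ∧ L.toFinset = F

/-- `C` is flag: every set of vertices of `C` pairwise joined by edges of `C` is a face. -/
def Flag (C : Finset (Finset V)) : Prop :=
  ∀ T : Finset V, T ⊆ verts C →
    (∀ u ∈ T, ∀ v ∈ T, u ≠ v → (skeleton C).Adj u v) → IsFace C T

/-- A critical clique: a clique of the 1-skeleton that becomes a face after removing a
suitable vertex. -/
def CriticalClique (C : Finset (Finset V)) (T : Finset V) : Prop :=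
  (∀ u ∈ T, ∀ v ∈ T, u ≠ v → (skeleton C).Adj u v) ∧ ∃ v ∈ T, IsFace C (T.erase v)

/-- `C` is `k`-banner: every critical clique with at least `k + 1` vertices is a face. -/
def Banner (C : Finset (Finset V)) (k : ℕ) : Prop :=
  ∀ T : Finset V, CriticalClique C T → k + 1 ≤ T.card → IsFace C T

/-- A pure `(d-1)`-complex is a pseudomanifold (possibly with boundary) if every
`(d-2)`-dimensional face lies in at most two facets. -/
def Pseudomanifold (C : Finset (Finset V)) (d : ℕ) : Prop :=
  ∀ f : Finset V, f.card + 1 = d → IsFace C f → (C.filter (fun F => f ⊆ F)).card ≤ 2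

/-- A pure `(d-1)`-complex is a pseudomanifold without boundary if every
`(d-2)`-dimensional face lies in exactly two facets. -/
def PseudomanifoldNoBoundary (C : Finset (Finset V)) (d : ℕ) : Prop :=
  ∀ f : Finset V, f.card + 1 = d → IsFace C f → (C.filter (fun F => f ⊆ F)).card = 2

/-- The join of two complexes (given by their facet sets, on disjoint vertex sets). -/
def join (C₁ C₂ : Finset (Finset V)) : Finset (Finset V) :=
  (C₁ ×ˢ C₂).image (fun p => p.1 ∪ p.2)

/-- The one-point-suspension of `C` at the vertex `v`; the two new suspension vertices
are `Sum.inr false` and `Sum.inr true`. -/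
def ops (C : Finset (Finset V)) (v : V) : Finset (Finset (V ⊕ Bool)) :=
  ((C.filter (fun F => v ∈ F)).image
      (fun F => ((F.erase v).image Sum.inl) ∪ {Sum.inr false, Sum.inr true}))
  ∪ ((C.filter (fun F => v ∉ F)).image (fun F => (F.image Sum.inl) ∪ {Sum.inr false}))
  ∪ ((C.filter (fun F => v ∉ F)).image (fun F => (F.image Sum.inl) ∪ {Sum.inr true}))

/-- The degree of a vertex in the 1-skeleton of `C`. -/
def degree (C : Finset (Finset V)) (x : V) : ℕ :=
  (Finset.univ.filter fun w => (skeleton C).Adj x w).card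

/-- Vertex-decomposability of a pure complex given by its facet set: either a single
simplex, or there is a vertex whose deletion stays pure of the same dimension and whose
link and deletion are both vertex-decomposable.  (The condition
`∀ F ∈ C, ∃ G ∈ C, x ∉ G ∧ F.erase x ⊆ G` expresses that the deletion of `x` is pure
of the same dimension, so that its facets are the facets of `C` avoiding `x`.) -/
inductive VertexDecomposable : Finset (Finset V) → Prop
  | simplex (F : Finset V) : VertexDecomposable {F}
  | step (C : Finset (Finset V)) (x : V) (hx : x ∈ verts C)
      (hdelpure : ∀ F ∈ C, ∃ G ∈ C, x ∉ G ∧ F.erase x ⊆ G)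
      (hlink : VertexDecomposable (link C x))
      (hdel : VertexDecomposable (C.filter (fun F => x ∉ F))) :
      VertexDecomposable C

/-- The maximum length (number of steps) of a monotone conservative path in `C`, over
all nonempty target sets of vertices of `C`. -/
def maxl (C : Finset (Finset V)) : ℕ :=
  sSup {n : ℕ | ∃ (S : Finset V) (Γ : List (List V)), S.Nonempty ∧ S ⊆ verts C ∧
    MonoConsPath C S Γ ∧ Γ.length = n + 1}

/-- `CombSeg C Γ S x₀`: the dual path `Γ` is a combinatorial segment in `C` from its
first facet to the target set `S`, anchored at `x₀` (Adiprasito–Benedetti). -/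
inductive CombSeg : Finset (Finset V) → List (Finset V) → Finset V → V → Prop
  | intersects (C : Finset (Finset V)) (F S : Finset V) (x₀ : V)
      (hF : F ∈ C) (hx : x₀ ∈ F) (hFS : (F ∩ S).Nonempty) :
      CombSeg C [F] S x₀
  | dimOne (C : Finset (Finset V)) (S : Finset V) (x₀ v : V)
      (hdim : ∀ F ∈ C, F.card = 1)
      (h₁ : {x₀} ∈ C) (h₂ : {v} ∈ C) (hx : x₀ ∉ S) (hv : v ∈ S) :
      CombSeg C [{x₀}, {v}] S x₀
  | step (C : Finset (Finset V)) (F₀ : Finset V) (Γ₁ Γ₂ : List (Finset V))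
      (Fk S : Finset V) (x₀ y x₀' : V) (ℓ : ℕ∞)
      (hdim : ∀ F ∈ C, 2 ≤ F.card)
      (hmem : ∀ F ∈ F₀ :: Γ₁, F ∈ C)
      (hdisj : ∀ F ∈ F₀ :: Γ₁, F ∩ S = ∅)
      (hℓ : vdistSets C F₀ S = ℓ)
      (hbefore : ∀ F ∈ F₀ :: Γ₁, ¬ vdistSets C F S < ℓ)
      (hafter : vdistSets C Fk S < ℓ)
      (hy : y ∈ Fk)
      (hyd : vdistSets C {y} S + 1 = ℓ)
      (hyuniq : ∀ z ∈ Fk, vdistSets C {z} S + 1 = ℓ → z = y)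
      (hx₀ : ∀ F ∈ F₀ :: Γ₁, x₀ ∈ F) (hx₀k : x₀ ∈ Fk)
      (hlink : CombSeg (link C x₀)
          (((F₀ :: Γ₁) ++ [Fk]).map (fun F => F.erase x₀))
          ((verts (link C x₀)).filter (fun w => vdistSets C {w} S + 1 = ℓ)) x₀')
      (htail : CombSeg C (Fk :: Γ₂) S y) :
      CombSeg C (F₀ :: Γ₁ ++ Fk :: Γ₂) S x₀

end MCP

/-! By induction along the ordering. The first entry is finite because normality, applied to
the empty face, connects any two facets by a dual path; as all facets have at least two
vertices (outside the degenerate `0/1` convention), consecutive facets share a vertex, so the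
1-skeleton is connected. The link of `v₁` is again pure and normal, and the hypotheses pass to
the derived target set `S'`. If `v₁ ∈ S`, then `S' = S ∖ v₁`, which is nonempty and a face of
the link not strictly contained in `F ∖ v₁`, since otherwise `S` would be strictly contained in
`F`. If `v₁ ∉ S`, then `S'` contains the second vertex of a shortest path from `v₁` to `S`, and
admissibility makes `v₁` a closest vertex of `F` to `S`, so `S'` avoids `F ∖ v₁`. -/

lemma List.Nodup.erase_toFinset_cons {α : Type*} [DecidableEq α] {x : α} {L : List α}
    (h : (x :: L).Nodup) : (x :: L).toFinset.erase x = L.toFinset := by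
  rw [List.toFinset_cons, Finset.erase_insert (by simpa using (List.nodup_cons.1 h).1)]

namespace SimpleGraph

variable {V : Type*} {G : SimpleGraph V}

lemma exists_adj_edist_eq_of_edist_eq_add_one {u v : V} {n : ℕ}
    (h : G.edist u v = n + 1) : ∃ w, G.Adj u w ∧ G.edist w v = n := by
  obtain ⟨p, hp⟩ := exists_walk_of_edist_eq_coe (k := n + 1) (by exact_mod_cast h)
  cases p with
  | nil => simp at hp
  | @cons _ w _ hadj q =>
    refine ⟨w, hadj, le_antisymm ?_ ?_⟩
    · have hq : q.length = n := by simpa using hp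
      exact hq ▸ edist_le q
    · have htri : G.edist u v ≤ G.edist u w + G.edist w v := G.edist_triangle
      rw [h, edist_eq_one_iff_adj.2 hadj, add_comm 1] at htri
      exact (ENat.add_le_add_iff_right ENat.one_ne_top).1 htri

lemma inf_edist_le_inf_edist_add_one_of_adj (S : Finset V) {u w : V} (h : G.Adj u w) :
    S.inf (G.edist u) ≤ S.inf (G.edist w) + 1 := by
  rcases S.eq_empty_or_nonempty with rfl | hS
  · simp
  obtain ⟨s, hs, hmin⟩ := S.exists_mem_eq_inf hS (G.edist w)
  calc S.inf (G.edist u) ≤ G.edist u s := Finset.inf_le hs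
    _ ≤ G.edist u w + G.edist w s := G.edist_triangle
    _ = S.inf (G.edist w) + 1 := by rw [hmin, edist_eq_one_iff_adj.2 h, add_comm]

lemma exists_adj_inf_edist_add_one_eq {S : Finset V} {u : V} (hS : S.Nonempty) (hu : u ∉ S)
    (hfin : S.inf (G.edist u) ≠ ⊤) :
    ∃ w, G.Adj u w ∧ S.inf (G.edist w) + 1 = S.inf (G.edist u) := by
  obtain ⟨s, hs, hmin⟩ := S.exists_mem_eq_inf hS (G.edist u)
  obtain ⟨m, hm⟩ := ENat.ne_top_iff_exists.1 (hmin ▸ hfin)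
  obtain _ | n := m
  · exact absurd ((edist_eq_zero_iff.1 hm.symm) ▸ hs) hu
  obtain ⟨w, hadj, hw⟩ :=
    exists_adj_edist_eq_of_edist_eq_add_one (n := n) (by rw [← hm, Nat.cast_succ])
  refine ⟨w, hadj, le_antisymm ?_ (inf_edist_le_inf_edist_add_one_of_adj S hadj)⟩
  calc S.inf (G.edist w) + 1 ≤ G.edist w s + 1 := by gcongr; exact Finset.inf_le hs
    _ = S.inf (G.edist u) := by rw [hw, hmin, ← hm, Nat.cast_succ]

end SimpleGraph

namespace MCP

lemma skeleton_reachable_of_mem_facet {V : Type} {C : Finset (Finset V)} {H : Finset V}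
    (hH : H ∈ C) {u v : V} (hu : u ∈ H) (hv : v ∈ H) : (skeleton C).Reachable u v := by
  rcases eq_or_ne u v with rfl | hne
  · rfl
  · exact SimpleGraph.Adj.reachable ⟨hne, H, hH, hu, hv⟩

variable {V : Type} [DecidableEq V]

lemma mem_verts {C : Finset (Finset V)} {w : V} : w ∈ verts C ↔ ∃ G ∈ C, w ∈ G := by
  simp [verts, Finset.mem_sup]

lemma mem_link {C : Finset (Finset V)} {x : V} {f : Finset V} :
    f ∈ link C x ↔ ∃ G ∈ C, x ∈ G ∧ G.erase x = f := by
  simp [link, and_assoc]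

lemma mem_verts_link {C : Finset (Finset V)} {x w : V} :
    w ∈ verts (link C x) ↔ w ≠ x ∧ ∃ G ∈ C, x ∈ G ∧ w ∈ G := by
  simp only [mem_verts, mem_link]
  constructor
  · rintro ⟨-, ⟨G, hG, hx, rfl⟩, hw⟩
    exact ⟨Finset.ne_of_mem_erase hw, G, hG, hx, Finset.mem_of_mem_erase hw⟩
  · rintro ⟨hne, G, hG, hx, hw⟩
    exact ⟨G.erase x, ⟨G, hG, hx, rfl⟩, Finset.mem_erase.2 ⟨hne, hw⟩⟩

lemma Pure.link {C : Finset (Finset V)} {d : ℕ} (h : Pure C (d + 1)) (x : V) :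
    Pure (link C x) d := by
  intro f hf
  obtain ⟨G, hG, hx, rfl⟩ := mem_link.1 hf
  rw [Finset.card_erase_of_mem hx, h G hG, Nat.add_sub_cancel]

lemma AdjFacets.erase {H H' : Finset V} {x : V} (h : AdjFacets H H') (hx : x ∈ H)
    (hx' : x ∈ H') : AdjFacets (H.erase x) (H'.erase x) := by
  obtain ⟨hne, hcard, hinter⟩ := h
  have hxm : x ∈ H ∩ H' := Finset.mem_inter.2 ⟨hx, hx'⟩
  refine ⟨fun he => hne ?_, ?_, ?_⟩
  · rw [← Finset.insert_erase hx, he, Finset.insert_erase hx']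
  · rw [Finset.card_erase_of_mem hx, Finset.card_erase_of_mem hx', hcard]
  · rw [Finset.erase_inter, Finset.inter_erase, Finset.erase_idem,
      Finset.card_erase_of_mem hxm, Finset.card_erase_of_mem hx]
    have := Finset.card_pos.2 ⟨x, hxm⟩
    omega

lemma Normal.link {C : Finset (Finset V)} (h : Normal C) (x : V) : Normal (link C x) := by
  intro f F' hF' G' hG' hfF hfG
  obtain ⟨F, hF, hxF, rfl⟩ := mem_link.1 hF'
  obtain ⟨G, hG, hxG, rfl⟩ := mem_link.1 hG'
  have hxf : x ∉ f := fun hx => Finset.notMem_erase x F (hfF hx)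
  obtain ⟨P, hhead, hlast, hmem, hchain⟩ := h (insert x f) F hF G hG
    (Finset.insert_subset hxF (hfF.trans (Finset.erase_subset _ _)))
    (Finset.insert_subset hxG (hfG.trans (Finset.erase_subset _ _)))
  have hxP : ∀ H ∈ P, x ∈ H := fun H hH => (hmem H hH).2 (Finset.mem_insert_self _ _)
  refine ⟨P.map (·.erase x), by simp [hhead], by simp [hlast], ?_, ?_⟩
  · simp only [List.mem_map]
    rintro - ⟨H, hH, rfl⟩
    refine ⟨mem_link.2 ⟨H, (hmem H hH).1, hxP H hH, rfl⟩, ?_⟩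
    rw [Finset.subset_erase]
    exact ⟨(Finset.subset_insert _ _).trans (hmem H hH).2, hxf⟩
  · exact (List.isChain_map _).2 <| hchain.imp_of_mem_imp fun H H' hH hH' hadj =>
      hadj.erase (hxP H hH) (hxP H' hH')

lemma IsOrderedFacet.link {C : Finset (Finset V)} {x : V} {L : List V}
    (h : IsOrderedFacet C (x :: L)) : IsOrderedFacet (link C x) L :=
  ⟨h.1.of_cons, mem_link.2 ⟨_, h.2, by simp, List.Nodup.erase_toFinset_cons h.1⟩⟩

lemma AdjFacets.inter_nonempty {H H' : Finset V} (h : AdjFacets H H') (hH : 2 ≤ H.card) :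
    (H ∩ H').Nonempty :=
  Finset.card_pos.1 (by have := h.2.2; omega)

lemma skeleton_reachable_of_reflTransGen {C : Finset (Finset V)} {F G : Finset V}
    (hFG : Relation.ReflTransGen (fun H H' => H' ∈ C ∧ (H ∩ H').Nonempty) F G) (hF : F ∈ C)
    {u v : V} (hu : u ∈ F) (hv : v ∈ G) : (skeleton C).Reachable u v := by
  induction hFG generalizing v with
  | refl => exact skeleton_reachable_of_mem_facet hF hu hv
  | tail _ hstep ih =>
    obtain ⟨hH', t, ht⟩ := hstep
    rw [Finset.mem_inter] at ht
    exact (ih ht.1).trans (skeleton_reachable_of_mem_facet hH' ht.2 hv)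

lemma Normal.skeleton_reachable {C : Finset (Finset V)} (h : Normal C)
    (hcard : ∀ H ∈ C, 2 ≤ H.card) {F G : Finset V} (hF : F ∈ C) (hG : G ∈ C) {u v : V}
    (hu : u ∈ F) (hv : v ∈ G) : (skeleton C).Reachable u v := by
  obtain ⟨P, hhead, hlast, hmem, hchain⟩ :=
    h ∅ F hF G hG (Finset.empty_subset _) (Finset.empty_subset _)
  obtain ⟨P, rfl⟩ := List.head?_eq_some_iff.1 hhead
  have hFG := List.relationReflTransGen_of_exists_isChain_cons
    (r := fun H H' => H' ∈ C ∧ (H ∩ H').Nonempty) P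
    (hchain.imp_of_mem_imp fun H H' hH hH' hadj =>
      ⟨(hmem H' hH').1, hadj.inter_nonempty (hcard H (hmem H hH).1)⟩)
    (Option.some.inj (List.getLast?_eq_some_getLast _ ▸ hlast))
  exact skeleton_reachable_of_reflTransGen hFG hF hu hv

lemma vdistSets_eq_inf {C : Finset (Finset V)} (h : 1 < C.sup Finset.card) (T S : Finset V) :
    vdistSets C T S = T.inf fun u => S.inf ((skeleton C).edist u) := by
  rw [vdistSets, if_neg h.not_ge]
  simp [Finset.inf_eq_iInf]

lemma vdistSets_singleton {C : Finset (Finset V)} (h : 1 < C.sup Finset.card) (u : V)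
    (S : Finset V) : vdistSets C {u} S = S.inf ((skeleton C).edist u) := by
  rw [vdistSets_eq_inf h, Finset.inf_singleton]

lemma vdistSets_le_singleton {C : Finset (Finset V)} (h : 1 < C.sup Finset.card)
    {T : Finset V} {u : V} (hu : u ∈ T) (S : Finset V) :
    vdistSets C T S ≤ vdistSets C {u} S := by
  rw [vdistSets_eq_inf h, vdistSets_singleton h]
  exact Finset.inf_le hu

lemma vdistSets_singleton_ne_top {C : Finset (Finset V)} {d : ℕ} (hpure : Pure C d)
    (hnormal : Normal C) {S : Finset V} (hS : S.Nonempty) (hSv : S ⊆ verts C)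
    {F : Finset V} (hF : F ∈ C) {x : V} (hx : x ∈ F) : vdistSets C {x} S ≠ ⊤ := by
  rcases le_or_gt (C.sup Finset.card) 1 with h1 | h1
  · rw [vdistSets, if_pos h1, if_pos ⟨Finset.singleton_nonempty x, hS⟩]
    split <;> simp
  have hcard : ∀ H ∈ C, 2 ≤ H.card := by
    obtain ⟨H₀, hH₀, hc⟩ := Finset.lt_sup_iff.1 h1
    intro H hH
    rw [hpure H hH, ← hpure H₀ hH₀]
    exact hc
  obtain ⟨s, hs⟩ := hS
  obtain ⟨G, hG, hsG⟩ := mem_verts.1 (hSv hs)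
  rw [vdistSets_singleton h1]
  exact ne_top_of_le_ne_top (SimpleGraph.edist_ne_top_iff_reachable.2
    (hnormal.skeleton_reachable hcard hF hG hx hsG)) (Finset.inf_le hs)

lemma targetSet_subset_verts (C : Finset (Finset V)) (x : V) (S : Finset V) :
    targetSet C x S ⊆ verts (link C x) := by
  unfold targetSet
  split_ifs
  exacts [Finset.inter_subset_right, Finset.filter_subset _ _]

lemma targetSet_of_mem {C : Finset (Finset V)} {x : V} {S : Finset V} (hxS : x ∈ S)
    (hS : IsFace C S) : targetSet C x S = S.erase x := by
  obtain ⟨G, hG, hSG⟩ := hS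
  rw [targetSet, if_pos hxS]
  ext w
  simp only [Finset.mem_inter, Finset.mem_erase, mem_verts_link]
  exact ⟨fun ⟨hw, hne, _⟩ => ⟨hne, hw⟩,
    fun ⟨hne, hw⟩ => ⟨hw, hne, G, hG, hSG hxS, hSG hw⟩⟩

lemma targetSet_nonempty_of_mem {C : Finset (Finset V)} {x : V} {S F : Finset V}
    (hxS : x ∈ S) (hS : IsFace C S) (hxF : x ∈ F) (hF : 2 ≤ F.card) (hSF : ¬ S ⊂ F) :
    (targetSet C x S).Nonempty := by
  rw [targetSet_of_mem hxS hS, Finset.nonempty_iff_ne_empty, Ne, Finset.erase_eq_empty_iff]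
  rintro (rfl | rfl)
  · exact Finset.notMem_empty x hxS
  · refine hSF (ssubset_iff_subset_ne.2 ⟨Finset.singleton_subset_iff.2 hxF, ?_⟩)
    rintro rfl
    simp at hF

lemma isFace_link_targetSet_of_mem {C : Finset (Finset V)} {x : V} {S : Finset V}
    (hxS : x ∈ S) (hS : IsFace C S) : IsFace (link C x) (targetSet C x S) := by
  rw [targetSet_of_mem hxS hS]
  obtain ⟨G, hG, hSG⟩ := hS
  exact ⟨G.erase x, mem_link.2 ⟨G, hG, hSG hxS, rfl⟩, Finset.erase_subset_erase x hSG⟩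

lemma not_targetSet_ssubset_erase_of_mem {C : Finset (Finset V)} {x : V} {S F : Finset V}
    (hxS : x ∈ S) (hS : IsFace C S) (hxF : x ∈ F) (hSF : ¬ S ⊂ F) :
    ¬ targetSet C x S ⊂ F.erase x := by
  rw [targetSet_of_mem hxS hS]
  intro h
  obtain ⟨hsub, hne⟩ := ssubset_iff_subset_ne.1 h
  refine hSF (ssubset_iff_subset_ne.2 ⟨?_, fun hEq => hne (hEq ▸ rfl)⟩)
  rw [← Finset.insert_erase hxS, ← Finset.insert_erase hxF]
  exact Finset.insert_subset_insert x hsub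

lemma targetSet_nonempty_of_notMem {C : Finset (Finset V)} (h : 1 < C.sup Finset.card)
    {x : V} {S : Finset V} (hS : S.Nonempty) (hxS : x ∉ S) (hfin : vdistSets C {x} S ≠ ⊤) :
    (targetSet C x S).Nonempty := by
  rw [vdistSets_singleton h] at hfin
  obtain ⟨w, hadj, hw⟩ := SimpleGraph.exists_adj_inf_edist_add_one_eq hS hxS hfin
  obtain ⟨hne, H, hH, hxH, hwH⟩ := hadj
  refine ⟨w, ?_⟩
  rw [targetSet, if_neg hxS, Finset.mem_filter, vdistSets_singleton h, vdistSets_singleton h]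
  exact ⟨mem_verts_link.2 ⟨hne.symm, H, hH, hxH, hwH⟩, hw⟩

lemma inter_targetSet_eq_empty_of_notMem {C : Finset (Finset V)} {x : V} {S T : Finset V}
    (hxS : x ∉ S) (hfin : vdistSets C {x} S ≠ ⊤)
    (hmin : ∀ v ∈ T, vdistSets C {x} S ≤ vdistSets C {v} S) :
    T ∩ targetSet C x S = ∅ := by
  refine Finset.eq_empty_of_forall_notMem fun v hv => ?_
  rw [Finset.mem_inter, targetSet, if_neg hxS, Finset.mem_filter] at hv
  obtain ⟨hvT, -, hvx⟩ := hv
  have hvfin : vdistSets C {v} S ≠ ⊤ := fun htop => hfin (by rw [← hvx, htop, top_add])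
  exact ((ENat.add_one_le_iff hvfin).1 (hvx ▸ hmin v hvT)).false

theorem distVector_ne_top_of_admissible :
    ∀ (F : List V) (C : Finset (Finset V)) (S : Finset V),
    Pure C F.length → Normal C → S.Nonempty → S ⊆ verts C → IsOrderedFacet C F →
    Admissible C F S → (F.toFinset ∩ S = ∅ ∨ (IsFace C S ∧ ¬ S ⊂ F.toFinset)) →
    ∀ lam ∈ distVector C F S, lam ≠ ⊤
  | [], _, _, _, _, _, _, _, _, _ => by simp [distVector]
  | [x], C, S, hpure, hnormal, hS, hSv, hF, _, _ => by
    simpa [distVector] using vdistSets_singleton_ne_top hpure hnormal hS hSv hF.2 (by simp)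
  | x :: y :: L, C, S, hpure, hnormal, hS, hSv, hF, hadm, hcase => by
    have hxF : x ∈ (x :: y :: L).toFinset := by simp
    have hfin := vdistSets_singleton_ne_top hpure hnormal hS hSv hF.2 hxF
    have hcard : 2 ≤ (x :: y :: L).toFinset.card := by
      rw [List.toFinset_card_of_nodup hF.1]; simp
    have h1 : 1 < C.sup Finset.card := hcard.trans (Finset.le_sup (f := Finset.card) hF.2)
    have hlink : (targetSet C x S).Nonempty ∧ ((y :: L).toFinset ∩ targetSet C x S = ∅ ∨
        (IsFace (link C x) (targetSet C x S) ∧ ¬ targetSet C x S ⊂ (y :: L).toFinset)) := by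
      by_cases hxS : x ∈ S
      · obtain ⟨hface, hSF⟩ := hcase.resolve_left
          (Finset.nonempty_iff_ne_empty.1 ⟨x, Finset.mem_inter.2 ⟨hxF, hxS⟩⟩)
        refine ⟨targetSet_nonempty_of_mem hxS hface hxF hcard hSF,
          Or.inr ⟨isFace_link_targetSet_of_mem hxS hface, ?_⟩⟩
        rw [← List.Nodup.erase_toFinset_cons hF.1]
        exact not_targetSet_ssubset_erase_of_mem hxS hface hxF hSF
      · refine ⟨targetSet_nonempty_of_notMem h1 hS hxS hfin,
          Or.inl (inter_targetSet_eq_empty_of_notMem hxS hfin fun v hv => ?_)⟩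
        rw [hadm.1]
        exact vdistSets_le_singleton h1 (List.mem_toFinset.2 (List.mem_cons_of_mem x
          (List.mem_toFinset.1 hv))) S
    rw [distVector, List.forall_mem_cons]
    exact ⟨hfin, distVector_ne_top_of_admissible (y :: L) (link C x) (targetSet C x S)
      (hpure.link x) (hnormal.link x) hlink.1 (targetSet_subset_verts C x S) hF.link hadm.2
      hlink.2⟩

end MCP

open MCP in
theorem statement16_general {V : Type} [DecidableEq V] (d : ℕ)
    (C : Finset (Finset V)) (hpure : Pure C d) (hnormal : Normal C)
    (S : Finset V) (hS : S.Nonempty) (hSv : S ⊆ verts C)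
    (F : List V) (hF : IsOrderedFacet C F) (hadm : Admissible C F S)
    (hcase : F.toFinset ∩ S = ∅ ∨ (IsFace C S ∧ ¬ S ⊂ F.toFinset)) :
    ∀ lam ∈ distVector C F S, lam ≠ ⊤ := by
  have hd : d = F.length := by rw [← hpure _ hF.2, List.toFinset_card_of_nodup hF.1]
  exact distVector_ne_top_of_admissible F C S (hd ▸ hpure) hnormal hS hSv hF hadm hcase

open MCP in
/-- finiteness of the vector of distances: if `F` is admissibly
ordered with respect to a nonempty target set `S`, and either `F ∩ S = ∅` or `S` is a
face of `C` not strictly contained in `F`, then all entries of the vector of distances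
from `F` to `S` are finite. -/
theorem statement16 {V : Type} [DecidableEq V] [Fintype V] (d : ℕ)
    (C : Finset (Finset V)) (hpure : Pure C d) (hnormal : Normal C)
    (S : Finset V) (hS : S.Nonempty) (hSv : S ⊆ verts C)
    (F : List V) (hF : IsOrderedFacet C F) (hadm : Admissible C F S)
    (hcase : F.toFinset ∩ S = ∅ ∨ (IsFace C S ∧ ¬ S ⊂ F.toFinset)) :
    ∀ lam ∈ distVector C F S, lam ≠ ⊤ :=
  statement16_general d C hpure hnormal S hS hSv F hF hadm hcase
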